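/- Let $k$ be a field, $m\ge 0$, and let $V=S_m\subset k[x]$ be the space of polynomials of degree at most $m$ (identified with $H^0(\mathbb{P}^1,\mathcal{O}(m))$ via a basis $1,x,\dots,x^m$). Consider the map $\alpha_1: k\langle 1,x\rangle \otimes S_2(V)\to S_{m+1}\otimes S_m$ defined by $\alpha_1(h\otimes t)=(\mu_h\otimes \mathrm{id})(t)$ where $\mu_h$ is multiplication by $h$ on the first tensor factor. Then $\alpha_1$ is surjective. -/

import Mathlib

open Polynomial TensorProduct

noncomputable section

variable (k : Type*) [Field k]

/-- polynomials of degree at most `d` in one variable. -/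
abbrev degLE (d : ℕ) : Submodule k (Polynomial k) := Polynomial.degreeLE k d

/-- the flip on `k[x] ⊗ k[x]`. -/
def flipMap : Polynomial k ⊗[k] Polynomial k →ₗ[k] Polynomial k ⊗[k] Polynomial k :=
  (TensorProduct.comm k _ _).toLinearMap

/-- `S_2(V)` for `V = S_m` the polynomials of degree `≤ m`: the symmetric tensors
inside `S_m ⊗ S_m 
 ⊆ k[x] ⊗ k[x]`. -/
def symTensors (m : ℕ) : Submodule k (Polynomial k ⊗[k] Polynomial k) :=
  (Submodule.map₂ (TensorProduct.mk k _ _) (degLE k m) (degLE k m)) ⊓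
    LinearMap.ker (flipMap k - LinearMap.id)

/-! The image of `α₁` contains every symmetric tensor (take `h = 1`) and `X` times every
symmetric tensor (take `h = x`), so it suffices to reach each monomial `X^a ⊗ X^b` with
`a ≤ m + 1`, `b ≤ m`. The cases `a = b` and `a = b + 1` are `1 ⬝ (X^b ⊗ X^b)` and
`X ⬝ (X^b ⊗ X^b)`; for `a < b` subtract `X^b ⊗ X^a` from the symmetrization; for `a ≥ b + 2`
an identity among such elements reduces `a - b` by two. -/

section TensorRange

variable {R M N M' : Type*} [CommSemiring R] [AddCommMonoid M] [AddCommMonoid N]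
  [AddCommMonoid M'] [Module R M] [Module R N] [Module R M']

theorem Submodule.map_rTensor_map₂_mk_le {f : M →ₗ[R] M'} {p : Submodule R M}
    {p' : Submodule R M'} (hf : p.map f ≤ p') (q : Submodule R N) :
    (map₂ (TensorProduct.mk R M N) p q).map (f.rTensor N) ≤
      map₂ (TensorProduct.mk R M' N) p' q := by
  rw [Submodule.map_le_iff_le_comap, Submodule.map₂_le]
  intro x hx y hy
  exact Submodule.apply_mem_map₂ _ (hf ⟨x, hx, rfl⟩) hy

end TensorRange

section

variable {k}

theorem X_pow_mem_degLE {a d : ℕ} (h : a ≤ d) : (X : k[X]) ^ a ∈ degLE k d :=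
  mem_degreeLE.2 <| (degree_X_pow_le a).trans (by exact_mod_cast h)

theorem one_mem_degLE_one : (1 : k[X]) ∈ degLE k 1 :=
  mem_degreeLE.2 <| degree_one_le.trans (by exact_mod_cast zero_le_one)

theorem X_mem_degLE_one : (X : k[X]) ∈ degLE k 1 :=
  mem_degreeLE.2 <| by exact_mod_cast degree_X_le

theorem mul_mem_degLE_succ {h p : k[X]} {m : ℕ} (hh : h ∈ degLE k 1) (hp : p ∈ degLE k m) :
    h * p ∈ degLE k (m + 1) := by
  rw [mem_degreeLE] at hh hp ⊢
  grw [degree_mul_le_of_le hh hp, add_comm]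
  norm_cast

theorem tmul_self_mem_symTensors {m : ℕ} {p : k[X]} (hp : p ∈ degLE k m) :
    p ⊗ₜ[k] p ∈ symTensors k m :=
  ⟨Submodule.apply_mem_map₂ _ hp hp, by simp [flipMap]⟩

theorem tmul_add_tmul_comm_mem_symTensors {m : ℕ} {p q : k[X]} (hp : p ∈ degLE k m)
    (hq : q ∈ degLE k m) : p ⊗ₜ[k] q + q ⊗ₜ[k] p ∈ symTensors k m :=
  ⟨add_mem (Submodule.apply_mem_map₂ _ hp hq) (Submodule.apply_mem_map₂ _ hq hp), by
    simp [flipMap, add_comm]⟩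

variable (k) in
def alphaOneImage (m : ℕ) : Submodule k (k[X] ⊗[k] k[X]) :=
  Submodule.span k
    {z : Polynomial k ⊗[k] Polynomial k |
      ∃ h ∈ degLE k 1, ∃ t ∈ symTensors k m,
        z = LinearMap.rTensor _ (LinearMap.mulLeft k h) t}

section alphaOneImage

variable {m : ℕ}

theorem rTensor_mulLeft_mem_alphaOneImage {h : k[X]} (hh : h ∈ degLE k 1) {t : k[X] ⊗[k] k[X]}
    (ht : t ∈ symTensors k m) :
    (LinearMap.mulLeft k h).rTensor _ t ∈ alphaOneImage k m :=
  Submodule.subset_span ⟨h, hh, t, ht, rfl⟩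

theorem symTensors_le_alphaOneImage : symTensors k m ≤ alphaOneImage k m := fun t ht => by
  simpa using rTensor_mulLeft_mem_alphaOneImage one_mem_degLE_one ht

theorem X_mul_tmul_mem_alphaOneImage {p q : k[X]} (h : p ⊗ₜ[k] q ∈ symTensors k m) :
    (X * p) ⊗ₜ[k] q ∈ alphaOneImage k m := by
  simpa using rTensor_mulLeft_mem_alphaOneImage X_mem_degLE_one h

theorem alphaOneImage_le_map₂ :
    alphaOneImage k m ≤
      Submodule.map₂ (TensorProduct.mk k _ _) (degLE k (m + 1)) (degLE k m) := by
  rw [alphaOneImage, Submodule.span_le]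
  rintro _ ⟨h, hh, t, ht, rfl⟩
  refine Submodule.map_rTensor_map₂_mk_le ?_ _ ⟨t, ht.1, rfl⟩
  rintro _ ⟨p, hp, rfl⟩
  exact mul_mem_degLE_succ hh hp

/-- The case `d + 2` rests on
`X^(b+d+2) ⊗ X^b = X ⬝ (X^(b+d+1) ⊗ X^b + X^b ⊗ X^(b+d+1))
  - (X^(b+1) ⊗ X^(b+d+1) + X^(b+d+1) ⊗ X^(b+1)) + X^(b+d+1) ⊗ X^(b+1)`. -/
theorem X_pow_add_tmul_X_pow_mem_alphaOneImage (d : ℕ) {b : ℕ} (hd : b + d ≤ m + 1)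
    (hb : b ≤ m) : ((X : k[X]) ^ (b + d)) ⊗ₜ[k] (X ^ b : k[X]) ∈ alphaOneImage k m := by
  induction d using Nat.twoStepInduction generalizing b with
  | zero => exact symTensors_le_alphaOneImage (tmul_self_mem_symTensors (X_pow_mem_degLE hb))
  | one =>
    simpa [pow_succ'] using
      X_mul_tmul_mem_alphaOneImage (tmul_self_mem_symTensors (X_pow_mem_degLE hb))
  | more d ih _ =>
    have hX : ((X : k[X]) ^ (b + (d + 2))) ⊗ₜ[k] (X ^ b : k[X]) +
        ((X : k[X]) ^ (b + 1)) ⊗ₜ[k] (X ^ (b + 1 + d) : k[X]) ∈ alphaOneImage k m := by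
      convert rTensor_mulLeft_mem_alphaOneImage X_mem_degLE_one
        (tmul_add_tmul_comm_mem_symTensors (m := m)
          (X_pow_mem_degLE (a := b + 1 + d) (by omega)) (X_pow_mem_degLE hb)) using 1
      simp only [map_add, LinearMap.rTensor_tmul, LinearMap.mulLeft_apply, ← pow_succ']
      rw [show b + 1 + d + 1 = b + (d + 2) by omega]
    have hsym := symTensors_le_alphaOneImage (tmul_add_tmul_comm_mem_symTensors (m := m)
      (X_pow_mem_degLE (k := k) (a := b + 1) (by omega))
      (X_pow_mem_degLE (a := b + 1 + d) (by omega)))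
    convert sub_mem hX (sub_mem hsym (ih (b := b + 1) (by omega) (by omega))) using 1
    abel

theorem X_pow_tmul_X_pow_mem_alphaOneImage {a b : ℕ} (ha : a ≤ m + 1) (hb : b ≤ m) :
    ((X : k[X]) ^ a) ⊗ₜ[k] (X ^ b : k[X]) ∈ alphaOneImage k m := by
  rcases le_or_gt b a with hba | hab
  · obtain ⟨d, rfl⟩ := Nat.exists_eq_add_of_le hba
    exact X_pow_add_tmul_X_pow_mem_alphaOneImage d ha hb
  · obtain ⟨d, rfl⟩ := Nat.exists_eq_add_of_le hab.le
    have hsym := symTensors_le_alphaOneImage (tmul_add_tmul_comm_mem_symTensors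
      (X_pow_mem_degLE (k := k) (a := a) (by omega)) (X_pow_mem_degLE hb))
    simpa using
      sub_mem hsym (X_pow_add_tmul_X_pow_mem_alphaOneImage d (b := a) (by omega) (by omega))

theorem map₂_le_alphaOneImage :
    Submodule.map₂ (TensorProduct.mk k _ _) (degLE k (m + 1)) (degLE k m) ≤
      alphaOneImage k m := by
  classical
  rw [degLE, degLE, degreeLE_eq_span_X_pow, degreeLE_eq_span_X_pow, Submodule.map₂_span_span,
    Submodule.span_le]
  simp only [Finset.coe_image, Finset.coe_range]
  rintro _ ⟨_, ⟨i, hi, rfl⟩, _, ⟨j, hj, rfl⟩, rfl⟩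
  exact X_pow_tmul_X_pow_mem_alphaOneImage (Nat.lt_succ_iff.1 hi) (Nat.lt_succ_iff.1 hj)

end alphaOneImage

end

/-- the map `α₁ : k⟨1,x⟩ ⊗ S_2(S_m) → S_{m+1} ⊗ S_m`,
`h ⊗ t ↦ (μ_h ⊗ id)(t)` (multiplication by `h` on the first tensor factor),
is surjective. -/
theorem alpha_one_surjective (m : ℕ) :
    Submodule.span k
        {z : Polynomial k ⊗[k] Polynomial k |
          ∃ h ∈ degLE k 1, ∃ t ∈ symTensors k m,
            z = LinearMap.rTensor _ (LinearMap.mulLeft k h) t} =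
      Submodule.map₂ (TensorProduct.mk k _ _) (degLE k (m + 1)) (degLE k m) :=
  le_antisymm alphaOneImage_le_map₂ map₂_le_alphaOneImage
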